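/- In the setting of Siegel's criterion proof: if L(X) = a₀X₀ + ⋯ + a_mX_m is a nonzero linear form with integer coefficients, H = max_j |a_j|, and there exist m+1 linearly independent integer linear forms L₀,…,L_m with coefficients bounded by A satisfying max_i |L_i(1,θ)| ≤ ε/A^{m-1} for some ε < 1/(m!·mH), then L(1,θ₁,…,θ_m) ≠ 0. -/

import Mathlib

/-!
Suppose `L(1, θ) = 0`. By Cramer's rule, some row of the invertible integer matrix `(b i j)` can be
replaced by the coefficients of `L` without killing the determinant, so the new integer matrix `C`
has `|det C| ≥ 1`. Adding `θⱼ` times column `j` to column `0` replaces that column by the values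
`Lᵢ(1, θ)`: zero in the row of `L`, at most `ε / A ^ (m - 1)` elsewhere. Expanding along it, each
of the `m` surviving minors has one row bounded by `H` and `m - 1` rows bounded by `A`, so
`|det C| ≤ m · m! · H · ε < 1`.
-/

open Finset

namespace Matrix

variable {n : Type*} [Fintype n] [DecidableEq n]

theorem det_le_factorial_mul_prod {R S : Type*} [CommRing R] [Nontrivial R] [CommRing S]
    [LinearOrder S] [IsStrictOrderedRing S] {A : Matrix n n R} {abv : AbsoluteValue R S}
    {c : n → S} (hc : ∀ i j, abv (A i j) ≤ c i) :
    abv A.det ≤ (Fintype.card n).factorial • ∏ i, c i :=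
  calc
    abv A.det = abv (∑ σ : Equiv.Perm n, Equiv.Perm.sign σ • ∏ i, A (σ i) i) :=
      congr_arg abv (det_apply _)
    _ ≤ ∑ σ : Equiv.Perm n, abv (Equiv.Perm.sign σ • ∏ i, A (σ i) i) := abv.sum_le _ _
    _ = ∑ σ : Equiv.Perm n, ∏ i, abv (A (σ i) i) :=
      sum_congr rfl fun σ _ => by rw [abv.map_units_int_smul, abv.map_prod]
    _ ≤ ∑ σ : Equiv.Perm n, ∏ i, c (σ i) := by gcongr with σ _ i; exact hc _ _
    _ = (Fintype.card n).factorial • ∏ i, c i := by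
      simp [Equiv.prod_comp, Fintype.card_perm]

theorem exists_det_updateRow_ne_zero {R : Type*} [CommRing R] [NoZeroDivisors R]
    {B : Matrix n n R} (hB : B.det ≠ 0) {a : n → R} (ha : a ≠ 0) :
    ∃ i, (B.updateRow i a).det ≠ 0 := by
  by_contra! h
  have hcramer : cramer Bᵀ a = 0 := funext fun i => by rw [cramer_transpose_apply, h i]; rfl
  have := mulVec_cramer Bᵀ a
  rw [hcramer, mulVec_zero, det_transpose] at this
  exact ha ((smul_eq_zero.mp this.symm).resolve_left hB)

theorem det_eq_sum_mulVec_mul_det_submatrix {R : Type*} [CommRing R] {k : ℕ}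
    (C : Matrix (Fin (k + 1)) (Fin (k + 1)) R) {v : Fin (k + 1) → R} (hv : v 0 = 1) :
    C.det = ∑ i : Fin (k + 1),
      (-1) ^ (i : ℕ) * (C *ᵥ v) i * (C.submatrix i.succAbove Fin.succ).det := by
  have hcol := det_updateCol_sum C 0 v
  rw [hv, one_smul] at hcol
  rw [← hcol, det_succ_column_zero]
  refine sum_congr rfl fun i _ => ?_
  congr 2
  simp [mulVec, dotProduct, mul_comm]

variable {R : Type*} [CommRing R] [LinearOrder R] [IsStrictOrderedRing R]

theorem abs_det_le_factorial_mul_pow_of_update {M : Matrix n n R} {r : n} {H A : R}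
    (hM : ∀ i j, |M i j| ≤ Function.update (fun _ => A) r H i) :
    |M.det| ≤ (Fintype.card n).factorial * (H * A ^ (Fintype.card n - 1)) := by
  have := det_le_factorial_mul_prod (abv := AbsoluteValue.abs) hM
  rwa [prod_update_of_mem (mem_univ r), prod_const, card_sdiff_of_subset (by simp),
    card_singleton, card_univ, nsmul_eq_mul] at this

theorem abs_det_submatrix_succAbove_succ_le {k : ℕ} {C : Matrix (Fin (k + 1)) (Fin (k + 1)) R}
    {i₀ : Fin (k + 1)} {H A : R} (hC : ∀ i j, |C i j| ≤ Function.update (fun _ => A) i₀ H i)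
    {i : Fin (k + 1)} (hi : i ≠ i₀) :
    |(C.submatrix i.succAbove Fin.succ).det| ≤ k.factorial * (H * A ^ (k - 1)) := by
  obtain ⟨r, rfl⟩ := Fin.exists_succAbove_eq hi.symm
  have hM : ∀ s j, |C.submatrix i.succAbove Fin.succ s j| ≤
      Function.update (fun _ => A) r H s := fun s j => by
    simpa [Function.update_apply, Fin.succAbove_right_inj] using hC (i.succAbove s) j.succ
  simpa using abs_det_le_factorial_mul_pow_of_update hM

theorem abs_det_le_of_abs_mulVec_le {k : ℕ} {C : Matrix (Fin (k + 1)) (Fin (k + 1)) R}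
    {v : Fin (k + 1) → R} (hv : v 0 = 1) {i₀ : Fin (k + 1)} (hi₀ : (C *ᵥ v) i₀ = 0)
    {δ H A : R} (hδ : ∀ i ≠ i₀, |(C *ᵥ v) i| ≤ δ)
    (hC : ∀ i j, |C i j| ≤ Function.update (fun _ => A) i₀ H i) :
    |C.det| ≤ k * (δ * (k.factorial * (H * A ^ (k - 1)))) := by
  rw [det_eq_sum_mulVec_mul_det_submatrix C hv, ← sum_erase univ (a := i₀) (by simp [hi₀])]
  calc _ ≤ ∑ i ∈ univ.erase i₀,
        |(-1) ^ (i : ℕ) * (C *ᵥ v) i * (C.submatrix i.succAbove Fin.succ).det| :=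
        abs_sum_le_sum_abs _ _
    _ ≤ #(univ.erase i₀) • (δ * (k.factorial * (H * A ^ (k - 1)))) := by
      refine sum_le_card_nsmul _ _ _ fun i hi => ?_
      replace hi := ne_of_mem_erase hi
      rw [abs_mul, abs_mul, abs_pow, abs_neg, abs_one, one_pow, one_mul]
      exact mul_le_mul (hδ i hi) (abs_det_submatrix_succAbove_succ_le hC hi) (abs_nonneg _)
        ((abs_nonneg _).trans (hδ i hi))
    _ = _ := by simp [card_erase_of_mem, nsmul_eq_mul]

end Matrix

-- `P = 0` is allowed: then `1 / P = 0` in Lean, and the conclusion holds trivially.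
theorem mul_lt_one_of_lt_one_div {K : Type*} [Field K] [LinearOrder K] [IsStrictOrderedRing K]
    {ε P : K} (hP : 0 ≤ P) (h : ε < 1 / P) : ε * P < 1 := by
  rcases hP.eq_or_lt with rfl | hP
  · simp
  · rwa [lt_div_iff₀ hP] at h

theorem siegel_key_step_general (m : ℕ) (θ : Fin m → ℝ) (a : Fin (m + 1) → ℤ) (ha : a ≠ 0)
    (H : ℤ) (hH : H = Finset.univ.sup' Finset.univ_nonempty fun j => |a j|)
    (ε : ℝ) (hε : ε < 1 / ((m.factorial : ℝ) * m * (H : ℝ)))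
    (b : Fin (m + 1) → Fin (m + 1) → ℤ)
    (hdet : Matrix.det (fun i j => (b i j : ℚ)) ≠ 0)
    (A : ℤ) (hA : A = Finset.univ.sup' Finset.univ_nonempty fun p : Fin (m + 1) × Fin (m + 1) => |b p.1 p.2|)
    (hbound : ∀ i : Fin (m + 1),
      |∑ j, (b i j : ℝ) * (Fin.cons 1 θ : Fin (m + 1) → ℝ) j| ≤ ε / (A : ℝ) ^ (m - 1)) :
    ∑ j, (a j : ℝ) * (Fin.cons 1 θ : Fin (m + 1) → ℝ) j ≠ 0 := by
  intro hL
  have haH : ∀ j, |(a j : ℝ)| ≤ H := fun j => by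
    rw [hH]; exact_mod_cast le_sup' (fun j => |a j|) (mem_univ j)
  have hbA : ∀ i j, |(b i j : ℝ)| ≤ A := fun i j => by
    rw [hA]
    exact_mod_cast le_sup' (fun p : Fin (m + 1) × Fin (m + 1) => |b p.1 p.2|) (mem_univ (i, j))
  have hdetZ : (Matrix.of b).det ≠ 0 := by
    have hdetQ : ((Matrix.of b).map (Int.cast : ℤ → ℚ)).det ≠ 0 := hdet
    rwa [← Int.cast_det, Int.cast_ne_zero] at hdetQ
  have hA_pos : (0 : ℝ) < A := by
    obtain ⟨i, j, hij⟩ : ∃ i j, b i j ≠ 0 := by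
      by_contra! h
      exact hdetZ (by simp [show Matrix.of b = 0 from funext₂ h])
    exact lt_of_lt_of_le (by exact_mod_cast abs_pos.mpr hij) (hbA i j)
  obtain ⟨i₀, hi₀⟩ := Matrix.exists_det_updateRow_ne_zero hdetZ ha
  set C : Matrix (Fin (m + 1)) (Fin (m + 1)) ℝ := ((Matrix.of b).updateRow i₀ a).map Int.cast
  have hC_one : 1 ≤ |C.det| := by
    rw [← Int.cast_det]; exact_mod_cast Int.one_le_abs hi₀
  have hC_le :
      |C.det| ≤ m * (ε / (A : ℝ) ^ (m - 1) * (m.factorial * (H * (A : ℝ) ^ (m - 1)))) := by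
    refine Matrix.abs_det_le_of_abs_mulVec_le (v := Fin.cons 1 θ) (i₀ := i₀) rfl ?_
      (fun i hi => ?_) fun i j => ?_
    · simpa [C, Matrix.mulVec, dotProduct] using hL
    · simpa [C, Matrix.mulVec, dotProduct, Matrix.updateRow_ne hi] using hbound i
    · by_cases hi : i = i₀
      · subst hi
        simpa [C] using haH j
      · simpa [C, hi] using hbA i j
  have hA_pow : (A : ℝ) ^ (m - 1) ≠ 0 := pow_ne_zero _ hA_pos.ne'
  rw [show (m : ℝ) * (ε / (A : ℝ) ^ (m - 1) * (m.factorial * (H * (A : ℝ) ^ (m - 1))))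
    = ε * (m.factorial * m * H) by field_simp] at hC_le
  have hP := mul_lt_one_of_lt_one_div
    (mul_nonneg (by positivity) ((abs_nonneg _).trans (haH 0))) hε
  linarith

theorem siegel_key_step (m : ℕ) (θ : Fin m → ℝ) (a : Fin (m + 1) → ℤ) (ha : a ≠ 0)
    (H : ℤ) (hH : H = Finset.univ.sup' Finset.univ_nonempty fun j => |a j|)
    (ε : ℝ) (hε0 : 0 < ε) (hε : ε < 1 / ((m.factorial : ℝ) * m * (H : ℝ)))
    (b : Fin (m + 1) → Fin (m + 1) → ℤ)
    (hdet : Matrix.det (fun i j => (b i j : ℚ)) ≠ 0)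
    (A : ℤ) (hA : A = Finset.univ.sup' Finset.univ_nonempty fun p : Fin (m + 1) × Fin (m + 1) => |b p.1 p.2|)
    (hbound : ∀ i : Fin (m + 1),
      |∑ j, (b i j : ℝ) * (Fin.cons 1 θ : Fin (m + 1) → ℝ) j| ≤ ε / (A : ℝ) ^ (m - 1)) :
    ∑ j, (a j : ℝ) * (Fin.cons 1 θ : Fin (m + 1) → ℝ) j ≠ 0 :=
  siegel_key_step_general m θ a ha H hH ε hε b hdet A hA hbound
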